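/- Let R be a finite non-commutative ring of order n with Z(R) = {0}. Then γ(Γ(R)) + γ(Γ̄(R)) = n - 2 if and only if n is even and Γ(R) is the disjoint union of one triangle (three mutually adjacent vertices) and n - 4 isolated vertices. -/

import Mathlib

open scoped Classical

noncomputable section

/-- The commuting graph of a (non-unital, possibly non-commutative) ring `R`:
vertices are the non-central elements, and two distinct vertices are adjacent
iff they commute. -/
def commutingGraph (R : Type*) [NonUnitalRing R] :
    SimpleGraph {x : R // x ∉ Set.center R} where
  Adj a b := a ≠ b ∧ (a : R) * b = (b : R) * a
  symm := by constructor; rintro a b ⟨h1, h2⟩; exact ⟨h1.symm, h2.symm⟩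
  loopless := by constructor; rintro a ⟨h, -⟩; exact h rfl

/-- A dominating set: every vertex not in `D` is adjacent to some vertex of `D`. -/
def SimpleGraph.IsDominatingSet {V : Type*} (G : SimpleGraph V) (D : Finset V) : Prop :=
  ∀ v, v ∉ D → ∃ u ∈ D, G.Adj u v

/-- The domination number: the minimum cardinality of a dominating set. -/
noncomputable def SimpleGraph.dominationNumber {V : Type*} [Fintype V] (G : SimpleGraph V) : ℕ :=
  sInf {n | ∃ D : Finset V, G.IsDominatingSet D ∧ D.card = n}

/-- The signed domination number: the minimum total weight of a function
`f : V → {-1, 1}` whose sum over every closed neighbourhood is at least `1`. -/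
noncomputable def SimpleGraph.signedDominationNumber {V : Type*} [Fintype V]
    (G : SimpleGraph V) : ℤ :=
  sInf {w : ℤ | ∃ f : V → ℤ, (∀ v, f v = 1 ∨ f v = -1) ∧
    (∀ v : V, 1 ≤ ∑ u ∈ Finset.univ.filter (fun u => G.Adj v u ∨ u = v), f u) ∧
    w = ∑ v, f v}

/-- Underlying type of the ring `E`. -/
def Ering : Type := ZMod 2 × ZMod 2

instance : Fintype Ering := inferInstanceAs (Fintype (ZMod 2 × ZMod 2))
instance : DecidableEq Ering := inferInstanceAs (DecidableEq (ZMod 2 × ZMod 2))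
instance : AddCommGroup Ering := inferInstanceAs (AddCommGroup (ZMod 2 × ZMod 2))
instance : Mul Ering := ⟨fun a b => (b.1 * a.1, b.1 * a.2)⟩

/-- `E = ⟨x,y : 2x=2y=0, x²=x, y²=y, xy=x, yx=y⟩`, realized on `ZMod 2 × ZMod 2`
with `x = (1,0)`, `y = (1,1)` and multiplication `a * b = (b₁a₁, b₁a₂)`. -/
instance : NonUnitalRing Ering :=
  { (inferInstance : AddCommGroup Ering), (inferInstance : Mul Ering) with
    left_distrib := by decide
    right_distrib := by decide
    zero_mul := by decide
    mul_zero := by decide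
    mul_assoc := by decide }

/-- Underlying type of the ring `F`. -/
def Fring : Type := ZMod 2 × ZMod 2

instance : Fintype Fring := inferInstanceAs (Fintype (ZMod 2 × ZMod 2))
instance : DecidableEq Fring := inferInstanceAs (DecidableEq (ZMod 2 × ZMod 2))
instance : AddCommGroup Fring := inferInstanceAs (AddCommGroup (ZMod 2 × ZMod 2))
instance : Mul Fring := ⟨fun a b => (a.1 * b.1, a.1 * b.2)⟩

/-- `F = ⟨x,y : 2x=2y=0, x²=x, y²=y, xy=y, yx=x⟩`, realized on `ZMod 2 × ZMod 2`
with `x = (1,0)`, `y = (1,1)` and multiplication `a * b = (a₁b₁, a₁b₂)`. -/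
instance : NonUnitalRing Fring :=
  { (inferInstance : AddCommGroup Fring), (inferInstance : Mul Fring) with
    left_distrib := by decide
    right_distrib := by decide
    zero_mul := by decide
    mul_zero := by decide
    mul_assoc := by decide }

/-!
The centralizer `C(x)` of a vertex `x` is an additive subgroup with `deg x + 2` elements, so
`|C(x)|` divides `n`, is at most `n / 2`, and kills `x`.

If `Γ(R)` had no isolated vertex, Ore's bound `2 γ(Γ) ≤ n - 1` and the bound
`γ(Γ̄) ≤ |C(v)| - 1` (the closed neighbourhood of `v` dominates `Γ̄`) would force every
centralizer to have index two. Then for non-commuting `x, y` every vertex commutes with `x`, `y`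
or `x + y`, so `γ(Γ) ≤ 3` and `n ≤ 8`; centralizers of size at most four are nested along edges,
which gives `γ(Γ̄) ≤ 2` and `n = 6`, where `Γ` would be a perfect matching on five vertices.

So `Γ` has an isolated vertex, hence `γ(Γ̄) = 1`, `γ(Γ) = n - 3` and every degree is at most two.
A vertex of degree two spans a triangle containing every edge, since otherwise three vertices
could be dropped from `V`. If all degrees were at most one, the sum of an isolated vertex
(of order two) and a vertex of degree one (of order three) would be a vertex of order six.
-/

open Finset

namespace SimpleGraph

variable {V : Type*} {G : SimpleGraph V}

lemma IsDominatingSet.mem_of_forall_not_adj {D : Finset V} (hD : G.IsDominatingSet D) {v : V}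
    (hv : ∀ u, ¬G.Adj v u) : v ∈ D := by
  by_contra h
  obtain ⟨u, -, huv⟩ := hD v h
  exact hv u huv.symm

variable [Fintype V]

lemma dominationNumber_le_card {D : Finset V} (hD : G.IsDominatingSet D) :
    G.dominationNumber ≤ #D :=
  Nat.sInf_le ⟨D, hD, rfl⟩

variable (G) in
lemma exists_isDominatingSet_card_eq_dominationNumber :
    ∃ D : Finset V, G.IsDominatingSet D ∧ #D = G.dominationNumber :=
  Nat.sInf_mem (s := {n | ∃ D : Finset V, G.IsDominatingSet D ∧ #D = n})
    ⟨_, univ, fun v hv => (hv (mem_univ v)).elim, rfl⟩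

lemma one_le_dominationNumber [Nonempty V] : 1 ≤ G.dominationNumber := by
  obtain ⟨D, hD, hcard⟩ := G.exists_isDominatingSet_card_eq_dominationNumber
  rw [← hcard, Nat.one_le_iff_ne_zero, Ne, card_eq_zero]
  rintro rfl
  obtain ⟨u, hu, -⟩ := hD (Classical.arbitrary V) (notMem_empty _)
  exact notMem_empty u hu

lemma dominationNumber_le_card_sub {X : Finset V} (hX : ∀ x ∈ X, ∃ u ∉ X, G.Adj u x) :
    G.dominationNumber ≤ Fintype.card V - #X := by
  rw [← card_compl]
  refine dominationNumber_le_card fun v hv => ?_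
  obtain ⟨u, hu, huv⟩ := hX v (by simpa using hv)
  exact ⟨u, mem_compl.2 hu, huv⟩

lemma dominationNumber_le_card_sub_degree (v : V) [Fintype (G.neighborSet v)] :
    G.dominationNumber ≤ Fintype.card V - G.degree v := by
  rw [← card_neighborFinset_eq_degree]
  exact dominationNumber_le_card_sub fun u hu =>
    ⟨v, fun hv => G.irrefl ((mem_neighborFinset G v v).1 hv), (mem_neighborFinset G v u).1 hu⟩

/-- Ore: with no isolated vertex, the complement of a minimum dominating set dominates. -/
lemma two_mul_dominationNumber_le (h : ∀ v, ∃ u, G.Adj v u) :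
    2 * G.dominationNumber ≤ Fintype.card V := by
  obtain ⟨D, hD, hcard⟩ := G.exists_isDominatingSet_card_eq_dominationNumber
  suffices hout : ∀ v ∈ D, ∃ u ∉ D, G.Adj u v by
    have := dominationNumber_le_card_sub hout
    have := card_le_univ D
    omega
  intro v hv
  by_contra! hin
  have hdom : G.IsDominatingSet (D.erase v) := by
    intro u hu
    by_cases huv : u = v
    · subst huv
      obtain ⟨w, hw⟩ := h u
      have hwD : w ∈ D := by_contra fun hwD => hin w hwD hw.symm
      exact ⟨w, mem_erase.2 ⟨hw.ne.symm, hwD⟩, hw.symm⟩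
    · have huD : u ∉ D := fun huD => hu (mem_erase.2 ⟨huv, huD⟩)
      obtain ⟨d, hd, hdu⟩ := hD u huD
      exact ⟨d, mem_erase.2 ⟨fun hdv => hin u huD (hdv ▸ hdu).symm, hd⟩, hdu⟩
  have := dominationNumber_le_card hdom
  rw [card_erase_of_mem hv] at this
  have := card_pos.2 ⟨v, hv⟩
  omega

lemma card_sub_card_lt_dominationNumber {S : Finset V} (hS : S.Nonempty)
    (h : ∀ u ∉ S, ∀ w, ¬G.Adj u w) : Fintype.card V - #S < G.dominationNumber := by
  obtain ⟨D, hD, hcard⟩ := G.exists_isDominatingSet_card_eq_dominationNumber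
  have hSc : Sᶜ ⊆ D := fun u hu => hD.mem_of_forall_not_adj (h u (mem_compl.1 hu))
  obtain ⟨d, hdD, hdS⟩ : ∃ d ∈ D, d ∈ S := by
    obtain ⟨s, hs⟩ := hS
    by_cases hsD : s ∈ D
    · exact ⟨s, hsD, hs⟩
    · obtain ⟨d, hd, hds⟩ := hD s hsD
      exact ⟨d, hd, by_contra fun hdS => h d hdS s hds⟩
  have := card_le_card (insert_subset hdD hSc)
  rw [card_insert_of_notMem (by simpa using hdS), card_compl] at this
  omega

lemma dominationNumber_compl_le_degree_add_one (v : V) [Fintype (G.neighborSet v)] :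
    Gᶜ.dominationNumber ≤ G.degree v + 1 := by
  rw [← card_neighborFinset_eq_degree]
  refine (dominationNumber_le_card (D := insert v (G.neighborFinset v)) fun u hu => ?_).trans
    (card_insert_le _ _)
  rw [mem_insert, not_or, mem_neighborFinset] at hu
  exact ⟨v, mem_insert_self _ _, (compl_adj G v u).2 ⟨Ne.symm hu.1, hu.2⟩⟩

end SimpleGraph

def SimpleGraph.IsTrianglePlusIsolated {V : Type*} (G : SimpleGraph V) : Prop :=
  ∃ a b c, a ≠ b ∧ a ≠ c ∧ b ≠ c ∧ G.Adj a b ∧ G.Adj a c ∧ G.Adj b c ∧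
    ∀ u v, G.Adj u v → u = a ∨ u = b ∨ u = c

lemma Nat.two_mul_eq_of_dvd {c n : ℕ} (hdvd : c ∣ n) (hc : 2 ≤ c) (h1 : n ≤ 2 * c + 1)
    (h2 : 2 * c ≤ n) : 2 * c = n := by
  obtain ⟨k, rfl⟩ := hdvd
  rcases k with _ | _ | _ | k <;> nlinarith

lemma eq_zero_or_eq_zero_of_three_nsmul_of_two_nsmul {A : Type*} [AddCommGroup A] {a b : A}
    (ha : 3 • a = 0) (hb : 2 • b = 0) (h : 2 • (a + b) = 0 ∨ 3 • (a + b) = 0) :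
    a = 0 ∨ b = 0 := by
  rcases h with h | h
  · left
    rw [smul_add, hb, add_zero] at h
    calc a = 3 • a - 2 • a := by abel
      _ = 0 := by rw [ha, h, sub_zero]
  · right
    rw [smul_add, ha, zero_add] at h
    calc b = 3 • b - 2 • b := by abel
      _ = 0 := by rw [hb, h, sub_zero]

section CommutingGraph

variable {R : Type*} [NonUnitalRing R]

lemma notMem_center_of_mul_ne {x y : R} (h : x * y ≠ y * x) : x ∉ Set.center R :=
  fun hx => h ((Semigroup.mem_center_iff.1 hx) y).symm

lemma notMem_center_iff_ne_zero (hz : Set.center R = {0}) {x : R} :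
    x ∉ Set.center R ↔ x ≠ 0 := by
  rw [hz, Set.mem_singleton_iff]

def centralizerAddSubgroup (x : R) : AddSubgroup R :=
  (NonUnitalSubring.centralizer {x}).toAddSubgroup

lemma mem_centralizerAddSubgroup {x y : R} : y ∈ centralizerAddSubgroup x ↔ x * y = y * x := by
  simp [centralizerAddSubgroup, NonUnitalSubring.mem_centralizer_iff]

/-- In a subgroup of index two the elements outside it all lie in one coset. -/
lemma commute_add_of_index_two {x y u : R} (hx : (centralizerAddSubgroup x).index = 2)
    (hy : (centralizerAddSubgroup y).index = 2) (hxy : x * y ≠ y * x) (hxu : x * u ≠ u * x)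
    (hyu : y * u ≠ u * y) : (x + y) * u = u * (x + y) := by
  have hx' : u - y ∈ centralizerAddSubgroup x := by
    rw [sub_eq_add_neg, AddSubgroup.add_mem_iff_of_index_two hx, AddSubgroup.neg_mem_iff,
      mem_centralizerAddSubgroup, mem_centralizerAddSubgroup]
    tauto
  have hy' : u - x ∈ centralizerAddSubgroup y := by
    rw [sub_eq_add_neg, AddSubgroup.add_mem_iff_of_index_two hy, AddSubgroup.neg_mem_iff,
      mem_centralizerAddSubgroup, mem_centralizerAddSubgroup]
    exact ⟨fun h => (hyu h).elim, fun h => (hxy h.symm).elim⟩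
  rw [mem_centralizerAddSubgroup] at hx' hy'
  rw [← sub_eq_zero]
  calc (x + y) * u - u * (x + y)
        = (x * (u - y) - (u - y) * x) + (y * (u - x) - (u - x) * y) := by noncomm_ring
    _ = 0 := by rw [hx', hy', sub_self, sub_self, add_zero]

lemma card_centralizerAddSubgroup_nsmul (x : R) :
    Nat.card (centralizerAddSubgroup x) • x = 0 := by
  have h := card_nsmul_eq_zero' (x := (⟨x, mem_centralizerAddSubgroup.2 rfl⟩ :
    centralizerAddSubgroup x))
  exact congrArg Subtype.val h

variable [Fintype R]

lemma card_centralizerAddSubgroup_dvd (x : R) :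
    Nat.card (centralizerAddSubgroup x) ∣ Fintype.card R := by
  simpa using AddSubgroup.card_addSubgroup_dvd_card (centralizerAddSubgroup x)

lemma card_centralizerAddSubgroup_mul_index (x : R) :
    Nat.card (centralizerAddSubgroup x) * (centralizerAddSubgroup x).index = Fintype.card R := by
  simpa using AddSubgroup.card_mul_index (centralizerAddSubgroup x)

lemma one_lt_index_centralizerAddSubgroup {x : R} (hx : x ∉ Set.center R) :
    1 < (centralizerAddSubgroup x).index := by
  refine AddSubgroup.one_lt_index_of_ne_top fun htop => hx ?_
  rw [Semigroup.mem_center_iff]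
  exact fun g => (mem_centralizerAddSubgroup.1 (htop ▸ AddSubgroup.mem_top g)).symm

lemma two_mul_card_centralizerAddSubgroup_le {x : R} (hx : x ∉ Set.center R) :
    2 * Nat.card (centralizerAddSubgroup x) ≤ Fintype.card R := by
  rw [← card_centralizerAddSubgroup_mul_index, mul_comm]
  exact Nat.mul_le_mul_left _ (one_lt_index_centralizerAddSubgroup hx)

lemma centralizerAddSubgroup_le_of_commute {u v : R}
    (hu : Nat.card (centralizerAddSubgroup u) ≤ 4) (hu0 : u ≠ 0) (hv0 : v ≠ 0) (huv : u ≠ v)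
    (h : u * v = v * u) :
    centralizerAddSubgroup u ≤ centralizerAddSubgroup v := by
  set H := centralizerAddSubgroup u ⊓ centralizerAddSubgroup v
  have hsub : ({0, u, v} : Finset R) ⊆ (H : Set R).toFinset := by
    intro z hz
    simp only [mem_insert, mem_singleton] at hz
    simp only [Set.mem_toFinset, SetLike.mem_coe, AddSubgroup.mem_inf, mem_centralizerAddSubgroup,
      H]
    rcases hz with rfl | rfl | rfl
    · simp
    · exact ⟨rfl, h.symm⟩
    · exact ⟨h, rfl⟩
  have h3 : 3 ≤ Nat.card H := by
    rw [← SetLike.coe_sort_coe, Nat.card_eq_card_toFinset]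
    refine le_trans ?_ (card_le_card hsub)
    rw [card_insert_of_notMem (by simp [hu0.symm, hv0.symm]),
      card_insert_of_notMem (by simpa using huv), card_singleton]
  have hdvd : Nat.card H ∣ Nat.card (centralizerAddSubgroup u) :=
    AddSubgroup.card_dvd_of_le inf_le_left
  have heq : Nat.card (centralizerAddSubgroup u) = Nat.card H :=
    Nat.eq_of_dvd_of_lt_two_mul (by have := Nat.le_of_dvd Nat.card_pos hdvd; omega) hdvd (by omega)
  exact inf_eq_left.1 (AddSubgroup.eq_of_le_of_card_ge inf_le_left heq.le)

lemma card_notMem_center (hz : Set.center R = {0}) :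
    Fintype.card {x : R // x ∉ Set.center R} = Fintype.card R - 1 := by
  simp [hz, Fintype.card_subtype_compl]

lemma card_centralizerAddSubgroup_eq_degree_add_two (hz : Set.center R = {0})
    (v : {x : R // x ∉ Set.center R}) :
    Nat.card (centralizerAddSubgroup (v : R)) = (commutingGraph R).degree v + 2 := by
  have hv0 : (v : R) ≠ 0 := (notMem_center_iff_ne_zero hz).1 v.2
  have hC : univ.filter (· ∈ centralizerAddSubgroup (v : R)) =
      insert 0 (insert (v : R) (((commutingGraph R).neighborFinset v).map
        (Function.Embedding.subtype _))) := by
    ext y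
    simp only [mem_filter, mem_univ, true_and, mem_centralizerAddSubgroup, mem_insert, mem_map,
      SimpleGraph.mem_neighborFinset, Function.Embedding.coe_subtype]
    constructor
    · intro hy
      by_cases hy0 : y = 0
      · exact Or.inl hy0
      by_cases hyv : y = v
      · exact Or.inr (Or.inl hyv)
      refine Or.inr (Or.inr ⟨⟨y, (notMem_center_iff_ne_zero hz).2 hy0⟩, ⟨?_, hy⟩, rfl⟩)
      exact fun h => hyv (congrArg Subtype.val h).symm
    · rintro (rfl | rfl | ⟨u, hu, rfl⟩)
      · simp
      · rfl
      · exact hu.2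
  rw [Nat.card_eq_fintype_card, Fintype.card_subtype, hC, card_insert_of_notMem,
    card_insert_of_notMem, card_map, SimpleGraph.card_neighborFinset_eq_degree]
  · simp only [mem_map, SimpleGraph.mem_neighborFinset, Function.Embedding.coe_subtype, not_exists,
      not_and]
    exact fun u hu huv => hu.1 (Subtype.ext huv.symm)
  · simp only [mem_insert, mem_map, Function.Embedding.coe_subtype, not_or, not_exists, not_and]
    exact ⟨hv0.symm, fun u _ hu => (notMem_center_iff_ne_zero hz).1 u.2 hu⟩

lemma dominationNumber_compl_commutingGraph_le_two (hz : Set.center R = {0})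
    (h4 : ∀ v : {x : R // x ∉ Set.center R}, Nat.card (centralizerAddSubgroup (v : R)) ≤ 4)
    {x y : R} (hxy : x * y ≠ y * x) : (commutingGraph R)ᶜ.dominationNumber ≤ 2 := by
  set vx : {x : R // x ∉ Set.center R} := ⟨x, notMem_center_of_mul_ne hxy⟩
  set vy : {x : R // x ∉ Set.center R} := ⟨y, notMem_center_of_mul_ne (Ne.symm hxy)⟩
  refine (SimpleGraph.dominationNumber_le_card (D := {vx, vy}) fun u hu => ?_).trans
    (card_le_two)
  simp only [mem_insert, mem_singleton, not_or] at hu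
  by_contra! hcon
  have hcomm : ∀ d ∈ ({vx, vy} : Finset _), d ≠ u → (d : R) * u = u * d := fun d hd hdu =>
    by_contra fun h => hcon d hd ((SimpleGraph.compl_adj _ _ _).2 ⟨hdu, fun hadj => h hadj.2⟩)
  have ne0 := fun w : {x : R // x ∉ Set.center R} => (notMem_center_iff_ne_zero hz).1 w.2
  have hxu := centralizerAddSubgroup_le_of_commute (h4 vx) (ne0 vx) (ne0 u)
    (fun h => hu.1 (Subtype.ext h).symm) (hcomm vx (by simp) (Ne.symm hu.1))
  have huy := centralizerAddSubgroup_le_of_commute (h4 u) (ne0 u) (ne0 vy)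
    (fun h => hu.2 (Subtype.ext h)) (hcomm vy (by simp) (Ne.symm hu.2)).symm
  exact hxy (mem_centralizerAddSubgroup.1 (huy (hxu (mem_centralizerAddSubgroup.2 rfl)))).symm

lemma dominationNumber_commutingGraph_le_three (hz : Set.center R = {0})
    (h2 : ∀ v : {x : R // x ∉ Set.center R}, (centralizerAddSubgroup (v : R)).index = 2)
    {x y : R} (hxy : x * y ≠ y * x) : (commutingGraph R).dominationNumber ≤ 3 := by
  have hxy0 : x + y ≠ 0 := by
    intro h
    rw [eq_neg_of_add_eq_zero_right h] at hxy
    exact hxy (by rw [neg_mul, mul_neg])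
  set vx : {x : R // x ∉ Set.center R} := ⟨x, notMem_center_of_mul_ne hxy⟩
  set vy : {x : R // x ∉ Set.center R} := ⟨y, notMem_center_of_mul_ne (Ne.symm hxy)⟩
  set vxy : {x : R // x ∉ Set.center R} := ⟨x + y, (notMem_center_iff_ne_zero hz).2 hxy0⟩
  refine (SimpleGraph.dominationNumber_le_card (D := {vx, vy, vxy}) fun u hu => ?_).trans
    card_le_three
  simp only [mem_insert, mem_singleton, not_or] at hu
  by_cases hxu : x * u = u * x
  · exact ⟨vx, by simp, Ne.symm hu.1, hxu⟩
  by_cases hyu : y * u = u * y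
  · exact ⟨vy, by simp, Ne.symm hu.2.1, hyu⟩
  exact ⟨vxy, by simp, Ne.symm hu.2.2, commute_add_of_index_two (h2 vx) (h2 vy) hxy hxu hyu⟩

lemma index_centralizerAddSubgroup_eq_two {x : R}
    (h : 2 * Nat.card (centralizerAddSubgroup x) = Fintype.card R) :
    (centralizerAddSubgroup x).index = 2 := by
  have hpos : 0 < Nat.card (centralizerAddSubgroup x) := Nat.card_pos
  have := card_centralizerAddSubgroup_mul_index x
  exact Nat.eq_of_mul_eq_mul_left hpos (by linarith)

lemma two_mul_card_centralizerAddSubgroup_eq (hz : Set.center R = {0})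
    (hadj : ∀ v, ∃ u, (commutingGraph R).Adj v u)
    (hsum : (commutingGraph R).dominationNumber + (commutingGraph R)ᶜ.dominationNumber =
      Fintype.card R - 2)
    (v : {x : R // x ∉ Set.center R}) :
    2 * Nat.card (centralizerAddSubgroup (v : R)) = Fintype.card R := by
  have := card_notMem_center hz
  have := (commutingGraph R).two_mul_dominationNumber_le hadj
  have := (commutingGraph R).dominationNumber_compl_le_degree_add_one v
  have := card_centralizerAddSubgroup_eq_degree_add_two hz v
  exact Nat.two_mul_eq_of_dvd (card_centralizerAddSubgroup_dvd _) (by omega) (by omega)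
    (two_mul_card_centralizerAddSubgroup_le v.2)

lemma exists_degree_commutingGraph_eq_zero (hz : Set.center R = {0}) {x y : R}
    (hxy : x * y ≠ y * x)
    (hsum : (commutingGraph R).dominationNumber + (commutingGraph R)ᶜ.dominationNumber =
      Fintype.card R - 2) :
    ∃ v, (commutingGraph R).degree v = 0 := by
  by_contra! hdeg
  have hadj v := ((commutingGraph R).degree_pos_iff_exists_adj v).1 (Nat.pos_of_ne_zero (hdeg v))
  have hhalf := two_mul_card_centralizerAddSubgroup_eq hz hadj hsum
  have hcard := card_centralizerAddSubgroup_eq_degree_add_two hz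
  have hOre := (commutingGraph R).two_mul_dominationNumber_le hadj
  have hm := card_notMem_center hz
  set v₀ : {x : R // x ∉ Set.center R} := ⟨x, notMem_center_of_mul_ne hxy⟩
  have hγ3 := dominationNumber_commutingGraph_le_three hz
    (fun v => index_centralizerAddSubgroup_eq_two (hhalf v)) hxy
  have hγc := (commutingGraph R).dominationNumber_compl_le_degree_add_one v₀
  have h4 (v : {x : R // x ∉ Set.center R}) :
      Nat.card (centralizerAddSubgroup (v : R)) ≤ 4 := by
    have := hhalf v; have := hhalf v₀; have := hcard v₀; omega
  have hγc2 := dominationNumber_compl_commutingGraph_le_two hz h4 hxy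
  have hdeg1 : ∀ v, (commutingGraph R).degree v = 1 :=
    fun v => by have := hhalf v; have := hcard v; have := hdeg v; omega
  -- `Γ` would be a perfect matching on the five non-zero elements
  have hodd := (commutingGraph R).even_card_odd_degree_vertices
  rw [filter_true_of_mem fun v _ => by rw [hdeg1 v]; exact odd_one, card_univ, hm] at hodd
  have := hhalf v₀; have := hcard v₀; have := hdeg1 v₀
  obtain ⟨k, hk⟩ := hodd
  omega

lemma isTrianglePlusIsolated_of_degree_eq_two (hz : Set.center R = {0})
    (h4 : ∀ v : {x : R // x ∉ Set.center R}, Nat.card (centralizerAddSubgroup (v : R)) ≤ 4)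
    (hγ : Fintype.card {x : R // x ∉ Set.center R} - 2 ≤ (commutingGraph R).dominationNumber)
    {v : {x : R // x ∉ Set.center R}} (hv : (commutingGraph R).degree v = 2) :
    (commutingGraph R).IsTrianglePlusIsolated := by
  have ne0 := fun w : {x : R // x ∉ Set.center R} => (notMem_center_iff_ne_zero hz).1 w.2
  obtain ⟨x, y, hxy, hN⟩ := card_eq_two.1 hv
  have hnbr : ∀ z, (commutingGraph R).Adj v z ↔ z = x ∨ z = y := fun z => by
    rw [← SimpleGraph.mem_neighborFinset, hN, mem_insert, mem_singleton]
  have hvx := (hnbr x).2 (Or.inl rfl)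
  have hvy := (hnbr y).2 (Or.inr rfl)
  have hle : ∀ w, w = v ∨ (commutingGraph R).Adj v w →
      centralizerAddSubgroup (w : R) ≤ centralizerAddSubgroup (v : R) := by
    rintro w (rfl | hw)
    · exact le_rfl
    · exact centralizerAddSubgroup_le_of_commute (h4 w) (ne0 w) (ne0 v)
        (fun h => hw.ne (Subtype.ext h).symm) hw.2.symm
  have hxy' : (commutingGraph R).Adj x y := ⟨hxy, mem_centralizerAddSubgroup.1
    (centralizerAddSubgroup_le_of_commute (h4 v) (ne0 v) (ne0 x)
      (fun h => hvx.ne (Subtype.ext h)) hvx.2 (mem_centralizerAddSubgroup.2 hvy.2))⟩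
  refine ⟨v, x, y, hvx.ne, hvy.ne, hxy, hvx, hvy, hxy', fun u w huw => ?_⟩
  by_contra! hu
  -- `u` commutes with `w`, while the centralizers of the triangle lie inside `C(v) = {0, v, x, y}`
  have hw : ¬(w = v ∨ (commutingGraph R).Adj v w) := fun hw =>
    not_or.2 hu.2 ((hnbr u).1 ⟨Ne.symm hu.1,
      mem_centralizerAddSubgroup.1 (hle w hw (mem_centralizerAddSubgroup.2 huw.2.symm))⟩)
  rw [hnbr] at hw
  simp only [not_or] at hw
  have hX : ∀ z ∈ ({u, x, y} : Finset _), ∃ t ∉ ({u, x, y} : Finset _),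
      (commutingGraph R).Adj t z := by
    simp only [mem_insert, mem_singleton]
    rintro z (rfl | rfl | rfl)
    · exact ⟨w, by simp [huw.ne.symm, hw.2.1, hw.2.2], huw.symm⟩
    · exact ⟨v, by simp [hu.1.symm, hvx.ne, hvy.ne], hvx⟩
    · exact ⟨v, by simp [hu.1.symm, hvx.ne, hvy.ne], hvy⟩
  have hcard : #({u, x, y} : Finset _) = 3 := by
    rw [card_insert_of_notMem (by simp [hu.2.1, hu.2.2]), card_pair hxy]
  have := SimpleGraph.dominationNumber_le_card_sub hX
  have := card_le_univ ({u, x, y} : Finset _)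
  omega

lemma exists_degree_commutingGraph_eq_two (hz : Set.center R = {0})
    (hdeg : ∀ v, (commutingGraph R).degree v ≤ 2)
    {v₀ : {x : R // x ∉ Set.center R}} (hv₀ : (commutingGraph R).degree v₀ = 0)
    {u w : {x : R // x ∉ Set.center R}} (huw : (commutingGraph R).Adj u w) :
    ∃ v, (commutingGraph R).degree v = 2 := by
  by_contra! h2
  have hnsmul (v : {x : R // x ∉ Set.center R}) :
      ((commutingGraph R).degree v + 2) • (v : R) = 0 :=
    card_centralizerAddSubgroup_eq_degree_add_two hz v ▸ card_centralizerAddSubgroup_nsmul (v : R)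
  have hu3 : 3 • (u : R) = 0 := by
    have := (commutingGraph R).degree_pos_iff_exists_adj u |>.2 ⟨w, huw⟩
    have := hdeg u; have := h2 u
    simpa [show (commutingGraph R).degree u = 1 by omega] using hnsmul u
  have hv₀2 : 2 • (v₀ : R) = 0 := by simpa [hv₀] using hnsmul v₀
  -- `u + v₀` would have order six, but every vertex is killed by `2` or `3`
  have hsum6 : 2 • ((u : R) + v₀) = 0 ∨ 3 • ((u : R) + v₀) = 0 := by
    by_cases h0 : (u : R) + v₀ = 0
    · simp [h0]
    have hz0 := hnsmul ⟨_, (notMem_center_iff_ne_zero hz).2 h0⟩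
    have := hdeg ⟨_, (notMem_center_iff_ne_zero hz).2 h0⟩
    have := h2 ⟨_, (notMem_center_iff_ne_zero hz).2 h0⟩
    obtain hd | hd : (commutingGraph R).degree ⟨_, (notMem_center_iff_ne_zero hz).2 h0⟩ = 0 ∨
        (commutingGraph R).degree ⟨_, (notMem_center_iff_ne_zero hz).2 h0⟩ = 1 := by omega
    · exact Or.inl (by rwa [hd] at hz0)
    · exact Or.inr (by rwa [hd] at hz0)
  rcases eq_zero_or_eq_zero_of_three_nsmul_of_two_nsmul hu3 hv₀2 hsum6 with h | h
  · exact (notMem_center_iff_ne_zero hz).1 u.2 h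
  · exact (notMem_center_iff_ne_zero hz).1 v₀.2 h

lemma even_card_and_isTrianglePlusIsolated_of_degree_eq_zero (hz : Set.center R = {0})
    (hsum : (commutingGraph R).dominationNumber + (commutingGraph R)ᶜ.dominationNumber =
      Fintype.card R - 2)
    {v₀ : {x : R // x ∉ Set.center R}} (hv₀ : (commutingGraph R).degree v₀ = 0) :
    Even (Fintype.card R) ∧ (commutingGraph R).IsTrianglePlusIsolated := by
  have hm := card_notMem_center hz
  have hcard := card_centralizerAddSubgroup_eq_degree_add_two hz
  have hγc := (commutingGraph R).dominationNumber_compl_le_degree_add_one v₀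
  have hγ :
      Fintype.card {x : R // x ∉ Set.center R} - 2 ≤ (commutingGraph R).dominationNumber := by
    omega
  have hdeg (v : {x : R // x ∉ Set.center R}) : (commutingGraph R).degree v ≤ 2 := by
    have := (commutingGraph R).dominationNumber_le_card_sub_degree v
    have := (commutingGraph R).degree_lt_card_verts v
    omega
  obtain ⟨u, -, w, huw⟩ : ∃ u ∉ ({v₀} : Finset _), ∃ w, (commutingGraph R).Adj u w := by
    by_contra! h
    have := (commutingGraph R).card_sub_card_lt_dominationNumber (singleton_nonempty v₀) h
    rw [card_singleton] at this
    omega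
  obtain ⟨v, hv⟩ := exists_degree_commutingGraph_eq_two hz hdeg hv₀ huw
  refine ⟨?_, isTrianglePlusIsolated_of_degree_eq_two hz
    (fun v => by have := hcard v; have := hdeg v; omega) hγ hv⟩
  obtain ⟨k, hk⟩ := card_centralizerAddSubgroup_dvd (v : R)
  exact ⟨2 * k, by rw [hk, hcard, hv]; ring⟩

lemma dominationNumber_add_compl_of_isTrianglePlusIsolated (hz : Set.center R = {0})
    (h : (commutingGraph R).IsTrianglePlusIsolated) :
    (commutingGraph R).dominationNumber + (commutingGraph R)ᶜ.dominationNumber =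
      Fintype.card R - 2 := by
  obtain ⟨a, b, c, hab, hac, hbc, hadjab, hadjac, hadjbc, hall⟩ := h
  have hm := card_notMem_center hz
  have hiso : ∀ u ∉ ({a, b, c} : Finset _), ∀ w, ¬(commutingGraph R).Adj u w := by
    intro u hu w huw
    exact hu (by simpa using hall u w huw)
  have hdeg : (commutingGraph R).degree a = 2 := by
    rw [← SimpleGraph.card_neighborFinset_eq_degree, ← card_pair hbc]
    congr 1
    ext u
    rw [SimpleGraph.mem_neighborFinset, mem_insert, mem_singleton]
    refine ⟨fun hau => ?_, by rintro (rfl | rfl) <;> assumption⟩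
    rcases hall u a hau.symm with rfl | h | h
    · exact (hau.ne rfl).elim
    · exact Or.inl h
    · exact Or.inr h
  have h8 := two_mul_card_centralizerAddSubgroup_le a.2
  rw [card_centralizerAddSubgroup_eq_degree_add_two hz, hdeg] at h8
  have habc : #({a, b, c} : Finset _) = 3 := by
    rw [card_insert_of_notMem (by simp [hab, hac]), card_pair hbc]
  obtain ⟨v₀, -, hv₀⟩ := exists_mem_notMem_of_card_lt_card (s := ({a, b, c} : Finset _))
    (t := univ) (by rw [habc, card_univ]; omega)
  have hγc := (commutingGraph R).dominationNumber_compl_le_degree_add_one v₀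
  rw [((commutingGraph R).degree_eq_zero_iff_notMem_support v₀).2
    fun ⟨w, hw⟩ => hiso v₀ hv₀ w hw] at hγc
  have : Nonempty {x : R // x ∉ Set.center R} := ⟨a⟩
  have := (commutingGraph R)ᶜ.one_le_dominationNumber
  have hup := (commutingGraph R).dominationNumber_le_card_sub (X := {b, c}) (by
    simp only [mem_insert, mem_singleton]
    rintro z (rfl | rfl) <;> [exact ⟨a, by simp [hab, hac], hadjab⟩;
      exact ⟨a, by simp [hab, hac], hadjac⟩])
  have hlow := (commutingGraph R).card_sub_card_lt_dominationNumber (insert_nonempty _ _) hiso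
  rw [card_pair hbc] at hup
  omega

end CommutingGraph

/-- Theorem A(iii): `γ(Γ(R)) + γ(Γ̄(R)) = n - 2` iff `n` is even and `Γ(R)` is the
disjoint union of one triangle and `n - 4` isolated vertices. -/
theorem stmt_2 (R : Type*) [NonUnitalRing R] [Fintype R] (n : ℕ)
    (hcard : Fintype.card R = n)
    (hnc : ∃ x y : R, x * y ≠ y * x)
    (hz : Set.center R = {0}) :
    (commutingGraph R).dominationNumber + ((commutingGraph R)ᶜ).dominationNumber = n - 2 ↔
      (Even n ∧ ∃ a b c : {x : R // x ∉ Set.center R},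
        a ≠ b ∧ a ≠ c ∧ b ≠ c ∧
        (commutingGraph R).Adj a b ∧ (commutingGraph R).Adj a c ∧
        (commutingGraph R).Adj b c ∧
        ∀ u v, (commutingGraph R).Adj u v → u = a ∨ u = b ∨ u = c) := by
  subst hcard
  obtain ⟨x, y, hxy⟩ := hnc
  refine ⟨fun hsum => ?_, fun h => dominationNumber_add_compl_of_isTrianglePlusIsolated hz h.2⟩
  obtain ⟨v₀, hv₀⟩ := exists_degree_commutingGraph_eq_zero hz hxy hsum
  exact even_card_and_isTrianglePlusIsolated_of_degree_eq_zero hz hsum hv₀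

end
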